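/- arXiv:2406.18961 — 2 statements merged into one kernel-verified Lean document; each statement's English description precedes it below -/
import Mathlib

section
/- Let R(τ) = d₀·(K/(2^{M/(τhB)} - 1))^{1/ψ} with all constants positive. Then the second derivative of R at any τ > 0 equals D₁(τ)·D₂(τ), where D₁(τ) = (M·d₀·ln2/(h²B²ψ²))·K^{1/ψ}·2^{M/(τhB)}/(τ⁴·(2^{M/(τhB)}-1)^{2+1/ψ}) > 0 and D₂(τ) = 2τhBψ(1 - 2^{M/(τhB)}) + M·ln2·(ψ + 2^{M/(τhB)}). In particular, if D₂(τ) < 0 for all τ > 0, then R is strictly concave on (0,∞). -/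
/-- The communication radius as a function of the transmission time `τ`. -/
noncomputable def commRadius (d₀ K M h B ψ : ℝ) (τ : ℝ) : ℝ :=
  d₀ * (K / ((2 : ℝ) ^ (M / (τ * h * B)) - 1)) ^ (1 / ψ)

/-- The positive factor `D₁(τ)` in the second derivative of the communication radius. -/
noncomputable def D₁fun (d₀ K M h B ψ : ℝ) (τ : ℝ) : ℝ :=
  (M * d₀ * Real.log 2 / (h ^ 2 * B ^ 2 * ψ ^ 2)) * K ^ (1 / ψ)
    * (2 : ℝ) ^ (M / (τ * h * B))
    / (τ ^ 4 * ((2 : ℝ) ^ (M / (τ * h * B)) - 1) ^ (2 + 1 / ψ))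

/-- The factor `D₂(τ)` in the second derivative of the communication radius. -/
noncomputable def D₂fun (M h B ψ : ℝ) (τ : ℝ) : ℝ :=
  2 * τ * h * B * ψ * (1 - (2 : ℝ) ^ (M / (τ * h * B)))
    + M * Real.log 2 * (ψ + (2 : ℝ) ^ (M / (τ * h * B)))

/-!
For `τ > 0` put `a = M / (h B)` and `E(τ) = 2 ^ (a / τ) > 1`, so that
`R = d₀ K^(1/ψ) (E - 1)^(-1/ψ)`. Since `E' = -a log 2 · E / τ²`, one application of the chain
rule gives `R' = d₀ K^(1/ψ) (a log 2 / ψ) · E (E - 1)^(-1/ψ-1) / τ²`, and a second one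
`R'' = D₁ D₂`, where `D₁ > 0` is read off its formula. Strict concavity then follows from
`R'' < 0` on `(0, ∞)`.
-/

open Real Filter Topology

section ConstRpowDiv

variable {a b p t : ℝ}

theorem hasDerivAt_const_rpow_div (hb : 0 < b) (ht : t ≠ 0) :
    HasDerivAt (fun s => b ^ (a / s)) (-(a * log b * b ^ (a / t) / t ^ 2)) t := by
  have hdiv : HasDerivAt (fun s => a / s) (-(a / t ^ 2)) t := by
    simpa [div_eq_mul_inv, neg_div] using (hasDerivAt_inv ht).const_mul a
  convert hdiv.const_rpow hb using 1
  ring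

theorem hasDerivAt_const_rpow_div_sub_one_rpow_neg (hb : 1 < b) (ha : 0 < a) (ht : 0 < t) :
    HasDerivAt (fun s => (b ^ (a / s) - 1) ^ (-p))
      (p * a * log b * (b ^ (a / t) * (b ^ (a / t) - 1) ^ (-p - 1) / t ^ 2)) t := by
  have hE : b ^ (a / t) - 1 ≠ 0 := (sub_pos.2 (one_lt_rpow hb (by positivity))).ne'
  convert ((hasDerivAt_const_rpow_div (by linarith) ht.ne').sub_const 1).rpow_const
    (p := -p) (Or.inl hE) using 1
  ring

theorem hasDerivAt_const_rpow_div_mul_rpow_div_sq (hb : 1 < b) (ha : 0 < a) (ht : 0 < t) :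
    HasDerivAt (fun s => b ^ (a / s) * (b ^ (a / s) - 1) ^ (-p - 1) / s ^ 2)
      (b ^ (a / t) * (b ^ (a / t) - 1) ^ (-p - 2) / t ^ 4
        * (a * log b * (p * b ^ (a / t) + 1) - 2 * t * (b ^ (a / t) - 1))) t := by
  have hE : 0 < b ^ (a / t) - 1 := sub_pos.2 (one_lt_rpow hb (by positivity))
  have hExp := hasDerivAt_const_rpow_div (a := a) (b := b) (by linarith) ht.ne'
  have hPow := (hExp.sub_const 1).rpow_const (p := -p - 1) (Or.inl hE.ne')
  refine ((hExp.mul hPow).div (hasDerivAt_pow 2 t) (by positivity)).congr_deriv ?_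
  set E := b ^ (a / t)
  have hsplit : (E - 1) ^ (-p - 1 - 1) = (E - 1) ^ (-p - 2) := by ring_nf
  have hshift : (E - 1) ^ (-p - 1) = (E - 1) ^ (-p - 2) * (E - 1) := by
    rw [← rpow_add_one hE.ne']; ring_nf
  simp only [Pi.mul_apply]
  rw [hsplit, hshift]
  field_simp
  ring

end ConstRpowDiv

section CommRadius

variable {d₀ K M h B ψ τ : ℝ}

theorem commRadius_eq_rpow_neg (hK : 0 ≤ K) (hM : 0 < M) (hh : 0 < h) (hB : 0 < B)
    (hτ : 0 < τ) :
    commRadius d₀ K M h B ψ τ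
      = d₀ * K ^ (1 / ψ) * ((2 : ℝ) ^ (M / (h * B) / τ) - 1) ^ (-(1 / ψ)) := by
  have hE : 0 ≤ (2 : ℝ) ^ (M / (h * B) / τ) - 1 :=
    sub_nonneg.2 (one_le_rpow (by norm_num) (by positivity))
  rw [commRadius, show M / (τ * h * B) = M / (h * B) / τ by ring, div_rpow hK hE,
    rpow_neg hE]
  ring

theorem hasDerivAt_commRadius (hK : 0 ≤ K) (hM : 0 < M) (hh : 0 < h) (hB : 0 < B)
    (hτ : 0 < τ) :
    HasDerivAt (commRadius d₀ K M h B ψ)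
      (d₀ * K ^ (1 / ψ) * (1 / ψ * (M / (h * B)) * log 2 *
        ((2 : ℝ) ^ (M / (h * B) / τ) * ((2 : ℝ) ^ (M / (h * B) / τ) - 1) ^ (-(1 / ψ) - 1)
          / τ ^ 2))) τ := by
  refine ((hasDerivAt_const_rpow_div_sub_one_rpow_neg one_lt_two (by positivity) hτ).const_mul
    (d₀ * K ^ (1 / ψ))).congr_of_eventuallyEq ?_
  filter_upwards [Ioi_mem_nhds hτ] with t ht
  exact commRadius_eq_rpow_neg hK hM hh hB ht

theorem deriv_deriv_commRadius (hK : 0 ≤ K) (hM : 0 < M) (hh : 0 < h) (hB : 0 < B)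
    (hψ : ψ ≠ 0) (hτ : 0 < τ) :
    deriv (deriv (commRadius d₀ K M h B ψ)) τ = D₁fun d₀ K M h B ψ τ * D₂fun M h B ψ τ := by
  have hderiv : deriv (commRadius d₀ K M h B ψ) =ᶠ[𝓝 τ] fun t =>
      d₀ * K ^ (1 / ψ) * (1 / ψ * (M / (h * B)) * log 2 *
        ((2 : ℝ) ^ (M / (h * B) / t) * ((2 : ℝ) ^ (M / (h * B) / t) - 1) ^ (-(1 / ψ) - 1)
          / t ^ 2)) := by
    filter_upwards [Ioi_mem_nhds hτ] with t ht
    exact (hasDerivAt_commRadius hK hM hh hB ht).deriv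
  rw [hderiv.deriv_eq, (((hasDerivAt_const_rpow_div_mul_rpow_div_sq one_lt_two (by positivity)
    hτ).const_mul _).const_mul _).deriv]
  have hE : 0 < (2 : ℝ) ^ (M / (h * B) / τ) - 1 :=
    sub_pos.2 (one_lt_rpow one_lt_two (by positivity))
  rw [D₁fun, D₂fun, show M / (τ * h * B) = M / (h * B) / τ by ring,
    show -(1 / ψ) - 2 = -(2 + 1 / ψ) by ring, rpow_neg hE.le]
  field_simp
  ring

theorem D₁fun_pos (hd : 0 < d₀) (hK : 0 < K) (hM : 0 < M) (hh : 0 < h) (hB : 0 < B)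
    (hψ : 0 < ψ) (hτ : 0 < τ) : 0 < D₁fun d₀ K M h B ψ τ := by
  have hE : 0 < (2 : ℝ) ^ (M / (τ * h * B)) - 1 :=
    sub_pos.2 (one_lt_rpow one_lt_two (by positivity))
  have hlog : 0 < log 2 := log_pos one_lt_two
  unfold D₁fun
  positivity

end CommRadius

/-- The second derivative of the communication radius `R` at any `τ > 0` equals
`D₁(τ)·D₂(τ)` with `D₁(τ) > 0`; in particular, if `D₂ < 0` on `(0,∞)` then `R` is
strictly concave on `(0,∞)`. -/
theorem comm_radius_second_deriv (d₀ K M h B ψ : ℝ) (hd : 0 < d₀) (hK : 0 < K)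
    (hM : 0 < M) (hh : 0 < h) (hB : 0 < B) (hψ : 0 < ψ) :
    (∀ τ > (0 : ℝ),
      deriv (deriv (commRadius d₀ K M h B ψ)) τ
        = D₁fun d₀ K M h B ψ τ * D₂fun M h B ψ τ ∧ 0 < D₁fun d₀ K M h B ψ τ) ∧
    ((∀ τ > (0 : ℝ), D₂fun M h B ψ τ < 0) →
      StrictConcaveOn ℝ (Set.Ioi 0) (commRadius d₀ K M h B ψ)) := by
  have hD₁ : ∀ τ > (0 : ℝ), 0 < D₁fun d₀ K M h B ψ τ :=
    fun τ hτ => D₁fun_pos hd hK hM hh hB hψ hτ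
  have hR'' : ∀ τ > (0 : ℝ), deriv (deriv (commRadius d₀ K M h B ψ)) τ
      = D₁fun d₀ K M h B ψ τ * D₂fun M h B ψ τ :=
    fun τ hτ => deriv_deriv_commRadius hK.le hM hh hB hψ.ne' hτ
  refine ⟨fun τ hτ => ⟨hR'' τ hτ, hD₁ τ hτ⟩, fun hD₂ => ?_⟩
  refine strictConcaveOn_of_deriv2_neg' (convex_Ioi 0)
    (fun τ hτ => (hasDerivAt_commRadius hK.le hM hh hB hτ).continuousAt.continuousWithinAt)
    fun τ hτ => ?_
  rw [Function.iterate_succ_apply, Function.iterate_one, hR'' τ hτ]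
  exact mul_neg_of_pos_of_neg (hD₁ τ hτ) (hD₂ τ hτ)
end

section
/- For the double-integrator recursion p_{k+1} = p_k + h·v_k + (h²/2)·u_k + w^p_k, v_{k+1} = v_k + h·u_k + w^v_k with known p_{k₀}, v_{k₀}, control inputs u_{k₀+l-1} lying in balls B[c_l, r_l], and noises w^p ∈ B[0, a], w^v ∈ B[0, b], the set of possible positions p_{k₀+σ} equals the closed ball centered at p_{k₀} + σh·v_{k₀} + h²·∑_{l=1}^{σ}(σ+1/2-l)·c_l with radius h²·∑_{l=1}^{σ}(σ+1/2-l)·r_l + σ·a + (1/2)σ(σ-1)·h·b. -/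
open scoped Pointwise

open Metric in
lemma sum_closedBall_eq {E : Type*} [NormedAddCommGroup E] [NormedSpace ℝ E]
    [ProperSpace E] {ι : Type*} (s : Finset ι) (x : ι → E) (ρ : ι → ℝ)
    (hρ : ∀ i ∈ s, 0 ≤ ρ i) :
    ∑ i ∈ s, closedBall (x i) (ρ i) = closedBall (∑ i ∈ s, x i) (∑ i ∈ s, ρ i) := by
  induction s using Finset.cons_induction with
  | empty => simp; exact Set.singleton_zero.symm
  | cons i s hi ih =>
    rw [Finset.sum_cons, Finset.sum_cons, Finset.sum_cons,
      ih (fun j hj => hρ j (Finset.mem_cons_of_mem hj)),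
      closedBall_add_closedBall (hρ i (Finset.mem_cons_self i s))
        (Finset.sum_nonneg fun j hj => hρ j (Finset.mem_cons_of_mem hj))]

lemma sum_Icc_cast_real (σ : ℕ) :
    ∑ l ∈ Finset.Icc 1 σ, (l : ℝ) = (σ : ℝ) * ((σ : ℝ) + 1) / 2 := by
  induction σ with
  | zero => simp
  | succ m ih =>
    rw [Finset.sum_Icc_succ_top (Nat.le_add_left 1 m), ih]
    push_cast; ring

/-- For the double integrator with known initial position/velocity, control inputs in
balls `B[c_l, r_l]`, position noise in `B[0,a]` and velocity noise in `B[0,b]`, the set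
of possible positions after `σ` steps (a Minkowski sum) equals the closed ball centered
at `p₀ + σh·v₀ + h²∑(σ+1/2-l)·c_l` with radius `h²∑(σ+1/2-l)·r_l + σa + σ(σ-1)hb/2`. -/
theorem predicted_position_range (n : ℕ) (h a b : ℝ) (hh : 0 < h) (ha : 0 ≤ a)
    (hb : 0 ≤ b) (σ : ℕ) (hσ : 1 ≤ σ) (p₀ v₀ : EuclideanSpace ℝ (Fin n))
    (c : ℕ → EuclideanSpace ℝ (Fin n)) (r : ℕ → ℝ) (hr : ∀ l, 0 ≤ r l) :
    ({p₀ + ((σ : ℝ) * h) • v₀} : Set (EuclideanSpace ℝ (Fin n)))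
      + ∑ l ∈ Finset.Icc 1 σ,
          (h ^ 2 * ((σ : ℝ) + 1 / 2 - (l : ℝ))) • Metric.closedBall (c l) (r l)
      + ∑ l ∈ Finset.Icc 1 σ, Metric.closedBall (0 : EuclideanSpace ℝ (Fin n)) a
      + ∑ l ∈ Finset.Icc 1 σ,
          (h * ((σ : ℝ) - (l : ℝ))) • Metric.closedBall (0 : EuclideanSpace ℝ (Fin n)) b
      = Metric.closedBall
          (p₀ + ((σ : ℝ) * h) • v₀
            + (h ^ 2) • ∑ l ∈ Finset.Icc 1 σ, ((σ : ℝ) + 1 / 2 - (l : ℝ)) • c l)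
          (h ^ 2 * ∑ l ∈ Finset.Icc 1 σ, ((σ : ℝ) + 1 / 2 - (l : ℝ)) * r l
            + (σ : ℝ) * a + 1 / 2 * (σ : ℝ) * ((σ : ℝ) - 1) * h * b) := by
  have key : ∀ l ∈ Finset.Icc 1 σ, ((l : ℝ)) ≤ (σ : ℝ) := by
    intro l hl
    exact_mod_cast (Finset.mem_Icc.mp hl).2
  have key1 : ∀ l ∈ Finset.Icc 1 σ, (0:ℝ) ≤ (σ : ℝ) + 1 / 2 - (l : ℝ) := by
    intro l hl; have := key l hl; linarith
  have key2 : ∀ l ∈ Finset.Icc 1 σ, (0:ℝ) ≤ (σ : ℝ) - (l : ℝ) := by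
    intro l hl; have := key l hl; linarith
  have h1 : ∀ l ∈ Finset.Icc 1 σ,
      (h ^ 2 * ((σ : ℝ) + 1 / 2 - (l : ℝ))) • Metric.closedBall (c l) (r l)
        = Metric.closedBall ((h ^ 2 * ((σ : ℝ) + 1 / 2 - (l : ℝ))) • c l)
            (h ^ 2 * ((σ : ℝ) + 1 / 2 - (l : ℝ)) * r l) := by
    intro l hl
    have hnn : 0 ≤ h ^ 2 * ((σ : ℝ) + 1 / 2 - (l : ℝ)) :=
      mul_nonneg (sq_nonneg h) (key1 l hl)
    rw [smul_closedBall _ _ (hr l), Real.norm_eq_abs, abs_of_nonneg hnn]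
  have h2 : ∀ l ∈ Finset.Icc 1 σ,
      (h * ((σ : ℝ) - (l : ℝ))) • Metric.closedBall (0 : EuclideanSpace ℝ (Fin n)) b
        = Metric.closedBall (0 : EuclideanSpace ℝ (Fin n)) (h * ((σ : ℝ) - (l : ℝ)) * b) := by
    intro l hl
    have hnn : 0 ≤ h * ((σ : ℝ) - (l : ℝ)) := mul_nonneg hh.le (key2 l hl)
    rw [smul_closedBall _ _ hb, Real.norm_eq_abs, abs_of_nonneg hnn, smul_zero]
  rw [Finset.sum_congr rfl h1, Finset.sum_congr rfl h2,
    sum_closedBall_eq _ _ _ (fun l hl =>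
      mul_nonneg (mul_nonneg (sq_nonneg h) (key1 l hl)) (hr l)),
    sum_closedBall_eq _ _ _ (fun l hl => ha),
    sum_closedBall_eq _ _ _ (fun l hl =>
      mul_nonneg (mul_nonneg hh.le (key2 l hl)) hb)]
  rw [singleton_add_closedBall,
    _root_.closedBall_add_closedBall
      (Finset.sum_nonneg fun l hl =>
        mul_nonneg (mul_nonneg (sq_nonneg h) (key1 l hl)) (hr l))
      (Finset.sum_nonneg fun l hl => ha),
    _root_.closedBall_add_closedBall
      (add_nonneg
        (Finset.sum_nonneg fun l hl =>
          mul_nonneg (mul_nonneg (sq_nonneg h) (key1 l hl)) (hr l))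
        (Finset.sum_nonneg fun l hl => ha))
      (Finset.sum_nonneg fun l hl =>
        mul_nonneg (mul_nonneg hh.le (key2 l hl)) hb)]
  have hcenter : (∑ l ∈ Finset.Icc 1 σ, (h ^ 2 * ((σ : ℝ) + 1 / 2 - (l : ℝ))) • c l)
      = (h ^ 2) • ∑ l ∈ Finset.Icc 1 σ, ((σ : ℝ) + 1 / 2 - (l : ℝ)) • c l := by
    rw [Finset.smul_sum]
    exact Finset.sum_congr rfl fun l hl => (smul_smul _ _ _).symm
  have hrad1 : (∑ l ∈ Finset.Icc 1 σ, h ^ 2 * ((σ : ℝ) + 1 / 2 - (l : ℝ)) * r l)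
      = h ^ 2 * ∑ l ∈ Finset.Icc 1 σ, ((σ : ℝ) + 1 / 2 - (l : ℝ)) * r l := by
    rw [Finset.mul_sum]; exact Finset.sum_congr rfl fun l hl => by ring
  have hcard : (Finset.Icc 1 σ).card = σ := by simp
  have hrad2 : (∑ _l ∈ Finset.Icc 1 σ, a) = (σ : ℝ) * a := by
    rw [Finset.sum_const, hcard, nsmul_eq_mul]
  have hsum3 : (∑ l ∈ Finset.Icc 1 σ, ((σ : ℝ) - (l : ℝ)))
      = 1 / 2 * (σ : ℝ) * ((σ : ℝ) - 1) := by
    rw [Finset.sum_sub_distrib, sum_Icc_cast_real, Finset.sum_const, hcard, nsmul_eq_mul]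
    ring
  have hrad3 : (∑ l ∈ Finset.Icc 1 σ, h * ((σ : ℝ) - (l : ℝ)) * b)
      = 1 / 2 * (σ : ℝ) * ((σ : ℝ) - 1) * h * b := by
    have heq : (∑ l ∈ Finset.Icc 1 σ, h * ((σ : ℝ) - (l : ℝ)) * b)
        = h * b * ∑ l ∈ Finset.Icc 1 σ, ((σ : ℝ) - (l : ℝ)) := by
      rw [Finset.mul_sum]; exact Finset.sum_congr rfl fun l hl => by ring
    rw [heq, hsum3]; ring
  rw [hcenter, hrad1, hrad2, hrad3]
  congr 1
  simp
end
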